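/- Let r ≥ 1, let p₁,…,p_r and p'₁,…,p'_r be sequences in [0,1] with p_r = p'_r = 1, define q_i := p_i·∏_{j<i}(1−p_j) and q'_i := p'_i·∏_{j<i}(1−p'_j), and let ε ≥ 0 be such that the two sequences are ε-ratio-close. Then Σ_{i=1}^{r−1} |q_i − q'_i| ≤ 4ε·(1 − q_r). -/

import Mathlib

/-!
Write `S m = ∏_{j ≤ m} (1 - p_j)` for the probability of no success in the first `m` trials.
Ratio-closeness gives `|p_i - p'_i| ≤ ε p_i`, and splitting `q_i - q'_i` and `S i - S' i` at
`S (i-1) - S' (i-1)` shows that the quantity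
`Σ_{i ≤ m} |q_i - q'_i| + |S m - S' m|` grows by at most `2ε p_m S (m-1) = 2ε (S (m-1) - S m)`
per trial; telescoping bounds it by `2ε (1 - S m)`, which at `m = r - 1` is `2ε (1 - q_r)`
since `p_r = 1`.
-/

open Finset

namespace FirstSuccess

def survivalProb (p : ℕ → ℝ) (m : ℕ) : ℝ := ∏ j ∈ Icc 1 m, (1 - p j)

def firstSuccessProb (p : ℕ → ℝ) (i : ℕ) : ℝ := p i * survivalProb p (i - 1)

lemma firstSuccessProb_succ (p : ℕ → ℝ) (m : ℕ) :
    firstSuccessProb p (m + 1) = p (m + 1) * survivalProb p m := rfl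

lemma survivalProb_succ (p : ℕ → ℝ) (m : ℕ) :
    survivalProb p (m + 1) = survivalProb p m * (1 - p (m + 1)) :=
  prod_Icc_succ_top (Nat.le_add_left 1 m) _

lemma survivalProb_nonneg {p : ℕ → ℝ} {m : ℕ} (hp : ∀ j ∈ Icc 1 m, p j ≤ 1) :
    0 ≤ survivalProb p m :=
  prod_nonneg fun j hj => sub_nonneg.mpr (hp j hj)

lemma survivalProb_le_one {p : ℕ → ℝ} {m : ℕ} (hp : ∀ j ∈ Icc 1 m, p j ∈ Set.Icc (0 : ℝ) 1) :
    survivalProb p m ≤ 1 :=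
  prod_le_one (fun j hj => sub_nonneg.mpr (hp j hj).2) fun j hj => by linarith [(hp j hj).1]

lemma abs_sub_le_mul_of_le_one_add_mul {a b ε : ℝ} (hε : 0 ≤ ε)
    (hab : a ≤ (1 + ε) * b) (hba : b ≤ (1 + ε) * a) : |a - b| ≤ ε * a := by
  rw [abs_sub_le_iff]
  constructor
  · rcases le_total b a with h | h <;> nlinarith
  · linarith

lemma abs_sub_mul_add_abs_sub_mul_le {a b T T' ε : ℝ} (hT : 0 ≤ T) (hb₀ : 0 ≤ b) (hb₁ : b ≤ 1)
    (hab : |a - b| ≤ ε * a) :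
    |a * T - b * T'| + |T * (1 - a) - T' * (1 - b)| ≤ |T - T'| + 2 * ε * a * T := by
  have hsucc : |a * T - b * T'| ≤ ε * a * T + b * |T - T'| :=
    calc |a * T - b * T'| = |(a - b) * T + b * (T - T')| := by ring_nf
      _ ≤ |a - b| * T + b * |T - T'| := by
          grw [abs_add_le, abs_mul, abs_mul, abs_of_nonneg hT, abs_of_nonneg hb₀]
      _ ≤ ε * a * T + b * |T - T'| := by gcongr
  have hsurv : |T * (1 - a) - T' * (1 - b)| ≤ (1 - b) * |T - T'| + ε * a * T :=
    calc |T * (1 - a) - T' * (1 - b)| = |(1 - b) * (T - T') + (b - a) * T| := by ring_nf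
      _ ≤ (1 - b) * |T - T'| + |a - b| * T := by
          grw [abs_add_le, abs_mul, abs_mul, abs_of_nonneg hT,
            abs_of_nonneg (sub_nonneg.mpr hb₁), abs_sub_comm b a]
      _ ≤ (1 - b) * |T - T'| + ε * a * T := by gcongr
  linarith

theorem sum_abs_sub_firstSuccessProb_add_abs_sub_survivalProb_le {p p' : ℕ → ℝ} {ε : ℝ}
    (m : ℕ) (hp : ∀ j ∈ Icc 1 m, p j ≤ 1) (hp' : ∀ j ∈ Icc 1 m, p' j ∈ Set.Icc (0 : ℝ) 1)
    (hclose : ∀ j ∈ Icc 1 m, |p j - p' j| ≤ ε * p j) :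
    ∑ i ∈ Icc 1 m, |firstSuccessProb p i - firstSuccessProb p' i|
        + |survivalProb p m - survivalProb p' m|
      ≤ 2 * ε * (1 - survivalProb p m) := by
  induction m with
  | zero => simp [survivalProb]
  | succ m ih =>
    have hsub : Icc 1 m ⊆ Icc 1 (m + 1) := Icc_subset_Icc_right m.le_succ
    have hlast : m + 1 ∈ Icc 1 (m + 1) := right_mem_Icc.mpr (Nat.le_add_left 1 m)
    have hprev := ih (fun j hj => hp j (hsub hj)) (fun j hj => hp' j (hsub hj))
      (fun j hj => hclose j (hsub hj))
    have hstep := abs_sub_mul_add_abs_sub_mul_le (T' := survivalProb p' m)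
      (survivalProb_nonneg fun j hj => hp j (hsub hj)) (hp' _ hlast).1 (hp' _ hlast).2
      (hclose _ hlast)
    rw [sum_Icc_succ_top (Nat.le_add_left 1 m), firstSuccessProb_succ, firstSuccessProb_succ,
      survivalProb_succ, survivalProb_succ]
    linarith

end FirstSuccess

open FirstSuccess in
theorem first_success_distributions_close
    (r : ℕ) (p p' : ℕ → ℝ) (ε : ℝ) (hε : 0 ≤ ε)
    (hp : ∀ i ∈ Finset.Icc 1 r, p i ∈ Set.Icc (0 : ℝ) 1)
    (hp' : ∀ i ∈ Finset.Icc 1 r, p' i ∈ Set.Icc (0 : ℝ) 1)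
    (hpr : p r = 1)
    (hclose : ∀ i ∈ Finset.Icc 1 r,
      p i ≤ (1 + ε) * p' i ∧ p' i ≤ (1 + ε) * p i ∧
      1 - p i ≤ (1 + ε) * (1 - p' i) ∧ 1 - p' i ≤ (1 + ε) * (1 - p i)) :
    ∑ i ∈ Finset.Icc 1 (r - 1),
        |p i * ∏ j ∈ Finset.Icc 1 (i - 1), (1 - p j)
          - p' i * ∏ j ∈ Finset.Icc 1 (i - 1), (1 - p' j)|
      ≤ 4 * ε * (1 - p r * ∏ j ∈ Finset.Icc 1 (r - 1), (1 - p j)) := by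
  have hsub : Icc 1 (r - 1) ⊆ Icc 1 r := Icc_subset_Icc_right (Nat.sub_le r 1)
  have hbound := sum_abs_sub_firstSuccessProb_add_abs_sub_survivalProb_le (r - 1)
    (fun j hj => (hp j (hsub hj)).2) (fun j hj => hp' j (hsub hj))
    fun j hj => abs_sub_le_mul_of_le_one_add_mul hε (hclose j (hsub hj)).1 (hclose j (hsub hj)).2.1
  have hsurv : survivalProb p (r - 1) ≤ 1 := survivalProb_le_one fun j hj => hp j (hsub hj)
  rw [hpr, one_mul]
  change ∑ i ∈ Icc 1 (r - 1), |firstSuccessProb p i - firstSuccessProb p' i|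
    ≤ 4 * ε * (1 - survivalProb p (r - 1))
  nlinarith [abs_nonneg (survivalProb p (r - 1) - survivalProb p' (r - 1))]
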